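/- In the bt-algebra presentation over C(v) (v² = u), the elements V_i := T_i + (v^{-1}-1)E_i T_i satisfy V_i² = 1 + (v - v^{-1}) E_i V_i, given the defining relations of E_i and T_i. -/
import Mathlib


/-- In the bt-algebra presentation over `ℂ(v)` with `v² = u`: if `E` is an idempotent
commuting with `T` and `T² = 1 + (u-1)E + (u-1)ET`, then `V := T + (v⁻¹-1)ET` satisfies
`V² = 1 + (v - v⁻¹) E V`. -/
theorem bt_new_presentation_quadratic
    (F : Type*) [Field F] (v u : F) (hv : v ≠ 0) (hvu : v ^ 2 = u)
    (A : Type*) [Ring A] [Algebra F A] (E T : A)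
    (hE : E ^ 2 = E) (hET : E * T = T * E)
    (hT : T ^ 2 = 1 + (u - 1) • E + (u - 1) • (E * T)) :
    (T + (v⁻¹ - 1) • (E * T)) ^ 2 =
      1 + (v - v⁻¹) • (E * (T + (v⁻¹ - 1) • (E * T))) := by
  have hE' : E * E = E := by rw [← sq]; exact hE
  have hEET : E * (E * T) = E * T := by rw [← mul_assoc, hE']
  have hT2 : T * T = 1 + (u - 1) • E + (u - 1) • (E * T) := by rw [← sq]; exact hT
  have hTET : T * (E * T) = E * (T * T) := by rw [← mul_assoc, ← hET, mul_assoc]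
  have hETT : (E * T) * (E * T) = E * (T * T) := by
    rw [mul_assoc, ← mul_assoc T E T, ← hET, ← mul_assoc, ← mul_assoc, hE', mul_assoc]
  have hETsq : E * (T * T) = u • E + (u - 1) • (E * T) := by
    rw [hT2, mul_add, mul_add, mul_one, mul_smul_comm, mul_smul_comm, hE', hEET]
    match_scalars <;> ring
  have hvv : v⁻¹ * v⁻¹ * u = 1 := by
    rw [← hvu]; field_simp
  rw [sq]
  simp only [mul_add, add_mul, smul_mul_assoc, mul_smul_comm, smul_smul, mul_assoc, hTET]
  simp only [← mul_assoc, hE']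
  simp only [mul_assoc, hETsq, hT2]
  simp only [mul_add, mul_one, mul_smul_comm, hEET, smul_add, smul_smul, hE']
  subst hvu
  match_scalars <;> field_simp <;> ring
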